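/- arXiv:1010.4173 — 2 statements merged into one kernel-verified Lean document; each statement's English description precedes it below -/
import Mathlib

section
/- Let X_1, X_2, ... be i.i.d. with continuous distribution F, thresholds γ < β, and critical boundaries α_{k,l} = α + b_k − c_l ≥ β. Then for k ≥ 0 and l ≥ 1, the joint probability P{N_+(ν) = k, N_-(ν) = l} equals [1 − F̄(β)/F̄(γ)]^k · ∏_{h=0}^{l−1} [1 − F̄(α_{k,h})/F̄(β)] · [F̄(α_{k,l})/F̄(γ)], where F̄ = 1 − F. -/
open MeasureTheory ProbabilityTheory Filter Set

/-- Numbers `(N₊(n), N₋(n))` of strengthening resp. weakening (harmful nonfatal) shocks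
among the first `n` shocks `X 0, …, X (n-1)`. -/
noncomputable def shockCounts (γ β α : ℝ) (b c : ℕ → ℝ) (X : ℕ → ℝ) : ℕ → ℕ × ℕ
  | 0 => (0, 0)
  | n + 1 =>
      let p := shockCounts γ β α b c X n
      (if γ ≤ X n ∧ X n < β ∧ p.2 = 0 then p.1 + 1 else p.1,
       if β ≤ X n ∧ X n < α + b p.1 - c p.2 then p.2 + 1 else p.2)

/-- The `(i+1)`-th shock `X i` is fatal: it exceeds the current critical boundary. -/
def fatalShock (γ β α : ℝ) (b c : ℕ → ℝ) (X : ℕ → ℝ) (i : ℕ) : Prop :=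
  α + b (shockCounts γ β α b c X i).1 - c (shockCounts γ β α b c X i).2 ≤ X i

/-- 0-based index of the first fatal shock (junk value if there is none);
the paper's `ν` equals this plus one. -/
noncomputable def nuShock (γ β α : ℝ) (b c : ℕ → ℝ) (X : ℕ → ℝ) : ℕ :=
  sInf {i | fatalShock γ β α b c X i}

/-- Survival function `F̄(x) = P(X > x)` of a law `μ` on `ℝ`, as a real number. -/
noncomputable def survival (μ : Measure ℝ) (x : ℝ) : ℝ := (μ (Set.Ioi x)).toReal

/-!
The event that the first `n` shocks are survived with counts `(k, l)` depends only on
`X 0, …, X (n-1)`, hence is independent of `X n`, and one more shock either keeps the counts or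
raises one of them by one. So its probability `u n (k, l)` obeys a recursion
`u (n+1) = u n * a + u' n * w`, and summing over `n` turns each such recursion into a factor
`w / (1 - a)`, e.g. `(F(β) - F(γ)) / F̄(γ)` per strengthening shock. Finally `ν = n` with counts
`(k, l)` means surviving `n` shocks with these counts and then `X n ≥ α_{k,l}`, which has
probability `u n (k, l) * F̄(α_{k,l})`.
-/

open scoped ENNReal

open Finset in
theorem ENNReal.tsum_mul_tsum_eq_tsum_sum_antidiagonal (f g : ℕ → ℝ≥0∞) :
    (∑' n, f n) * ∑' n, g n = ∑' n, ∑ kl ∈ antidiagonal n, f kl.1 * g kl.2 := by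
  calc (∑' n, f n) * ∑' n, g n = ∑' p : ℕ × ℕ, f p.1 * g p.2 := by
        rw [ENNReal.tsum_prod' (f := fun p : ℕ × ℕ => f p.1 * g p.2), ← ENNReal.tsum_mul_right]
        exact tsum_congr fun i => ENNReal.tsum_mul_left.symm
    _ = ∑' x : (Σ n : ℕ, antidiagonal n), f x.2.1.1 * g x.2.1.2 :=
        (HasAntidiagonal.sigmaAntidiagonalEquivProd.tsum_eq (fun p : ℕ × ℕ => f p.1 * g p.2)).symm
    _ = ∑' n, ∑ kl ∈ antidiagonal n, f kl.1 * g kl.2 := by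
        rw [ENNReal.tsum_sigma']
        exact tsum_congr fun n => Finset.tsum_subtype _ (fun kl : ℕ × ℕ => f kl.1 * g kl.2)

open Finset in
/-- Unrolling gives `f (n + 1) = f 0 * a ^ (n + 1) + w * ∑_{i + d = n} v i * a ^ d`, a Cauchy
product with the geometric series, which in `ℝ≥0∞` is summed without any finiteness argument. -/
theorem ENNReal.tsum_eq_of_linear_recurrence {f v : ℕ → ℝ≥0∞} {a w : ℝ≥0∞}
    (h : ∀ n, f (n + 1) = f n * a + v n * w) :
    ∑' n, f n = (f 0 + (∑' n, v n) * w) * (1 - a)⁻¹ := by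
  have closed (n : ℕ) :
      f (n + 1) = f 0 * a ^ (n + 1) + w * ∑ kl ∈ antidiagonal n, v kl.1 * a ^ kl.2 := by
    induction n with
    | zero => simp [h, mul_comm]
    | succ n ih =>
      rw [h, ih, Nat.sum_antidiagonal_succ']
      simp only [pow_succ, pow_zero, ← mul_assoc, ← sum_mul]
      ring
  have shift (g : ℕ → ℝ≥0∞) : ∑' n, g n = g 0 + ∑' n, g (n + 1) :=
    tsum_eq_zero_add' ENNReal.summable
  have geom : ∑' n, a ^ n = 1 + (∑' n, a ^ n) * a := by
    conv_lhs => rw [shift]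
    simp only [pow_zero, pow_succ, ENNReal.tsum_mul_right]
  rw [shift f, ← ENNReal.tsum_geometric, add_mul]
  simp only [closed, pow_succ, ENNReal.tsum_add, ENNReal.tsum_mul_left, ENNReal.tsum_mul_right,
    ← ENNReal.tsum_mul_tsum_eq_tsum_sum_antidiagonal]
  conv_rhs => arg 1; rw [geom]
  ring

lemma MeasurableSet.inter_setOf_apply_mem {E : Type*} [MeasurableSpace E] {n : ℕ}
    {S : Set (ℕ → E)} (hS : MeasurableSet[cylinderEvents (Iio n)] S) {R : Set E}
    (hR : MeasurableSet R) : MeasurableSet[cylinderEvents (Iio (n + 1))] (S ∩ {x | x n ∈ R}) :=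
  (cylinderEvents_mono (Iio_subset_Iio n.le_succ) _ hS).inter
    (measurable_cylinderEvent_apply (mem_Iio.2 n.lt_succ_self) hR)

def aliveWith (γ β α : ℝ) (b c : ℕ → ℝ) (n : ℕ) (p : ℕ × ℕ) : Set (ℕ → ℝ) :=
  {x | (∀ i < n, ¬ fatalShock γ β α b c x i) ∧ shockCounts γ β α b c x n = p}

section Deterministic

variable {γ β α : ℝ} {b c : ℕ → ℝ}

lemma aliveWith_zero_zero : aliveWith γ β α b c 0 (0, 0) = univ := by
  simp [aliveWith, shockCounts]

lemma aliveWith_zero_of_ne {p : ℕ × ℕ} (hp : p ≠ (0, 0)) : aliveWith γ β α b c 0 p = ∅ := by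
  simp [aliveWith, shockCounts, Ne.symm hp]

lemma mem_aliveWith_succ {x : ℕ → ℝ} {n : ℕ} {q : ℕ × ℕ} :
    x ∈ aliveWith γ β α b c (n + 1) q ↔
      (∀ i < n, ¬ fatalShock γ β α b c x i) ∧
      x n < α + b (shockCounts γ β α b c x n).1 - c (shockCounts γ β α b c x n).2 ∧
      shockCounts γ β α b c x (n + 1) = q := by
  simp only [aliveWith, mem_ofPred_eq, fatalShock, Nat.forall_lt_succ_right, not_le, and_assoc]

lemma aliveWith_succ_zero_zero (hγβ : γ ≤ β) (hβα : ∀ k l, β ≤ α + b k - c l) (n : ℕ) :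
    aliveWith γ β α b c (n + 1) (0, 0) = aliveWith γ β α b c n (0, 0) ∩ {x | x n ∈ Iio γ} := by
  ext x
  rw [mem_aliveWith_succ, shockCounts]
  simp only [aliveWith, mem_inter_iff, mem_ofPred_eq, mem_Iio]
  generalize shockCounts γ β α b c x n = p
  obtain ⟨j, h⟩ := p
  generalize (∀ i < n, ¬ fatalShock γ β α b c x i) = survived
  have := hβα j h
  grind

lemma aliveWith_succ_succ_zero (hγβ : γ ≤ β) (hβα : ∀ k l, β ≤ α + b k - c l) (n j : ℕ) :
    aliveWith γ β α b c (n + 1) (j + 1, 0) =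
      aliveWith γ β α b c n (j + 1, 0) ∩ {x | x n ∈ Iio γ} ∪
        aliveWith γ β α b c n (j, 0) ∩ {x | x n ∈ Ico γ β} := by
  ext x
  rw [mem_aliveWith_succ, shockCounts]
  simp only [aliveWith, mem_union, mem_inter_iff, mem_ofPred_eq, mem_Iio, mem_Ico]
  generalize shockCounts γ β α b c x n = p
  obtain ⟨j', h⟩ := p
  generalize (∀ i < n, ¬ fatalShock γ β α b c x i) = survived
  have := hβα j' h
  grind

lemma aliveWith_succ_succ (hβα : ∀ k l, β ≤ α + b k - c l) (n j h : ℕ) :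
    aliveWith γ β α b c (n + 1) (j, h + 1) =
      aliveWith γ β α b c n (j, h + 1) ∩ {x | x n ∈ Iio β} ∪
        aliveWith γ β α b c n (j, h) ∩ {x | x n ∈ Ico β (α + b j - c h)} := by
  ext x
  rw [mem_aliveWith_succ, shockCounts]
  simp only [aliveWith, mem_union, mem_inter_iff, mem_ofPred_eq, mem_Iio, mem_Ico]
  generalize shockCounts γ β α b c x n = p
  obtain ⟨j', h'⟩ := p
  generalize (∀ i < n, ¬ fatalShock γ β α b c x i) = survived
  have := hβα j' h'
  grind

lemma measurableSet_aliveWith (hγβ : γ ≤ β) (hβα : ∀ k l, β ≤ α + b k - c l) (n : ℕ)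
    (p : ℕ × ℕ) : MeasurableSet[cylinderEvents (Iio n)] (aliveWith γ β α b c n p) := by
  induction n generalizing p with
  | zero =>
    by_cases hp : p = (0, 0)
    · rw [hp, aliveWith_zero_zero]; exact @MeasurableSet.univ _ (cylinderEvents _)
    · rw [aliveWith_zero_of_ne hp]; exact @MeasurableSet.empty _ (cylinderEvents _)
  | succ n ih =>
    have step (q : ℕ × ℕ) {R : Set ℝ} (hR : MeasurableSet R) :=
      (ih q).inter_setOf_apply_mem hR
    rcases p with ⟨j, _ | h⟩
    · cases j with
      | zero =>
        rw [aliveWith_succ_zero_zero hγβ hβα]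
        exact step _ measurableSet_Iio
      | succ j =>
        rw [aliveWith_succ_succ_zero hγβ hβα]
        exact (step _ measurableSet_Iio).union (step _ measurableSet_Ico)
    · rw [aliveWith_succ_succ hβα]
      exact (step _ measurableSet_Iio).union (step _ measurableSet_Ico)

lemma nuShock_eq_of_fatalShock {x : ℕ → ℝ} {n : ℕ} (hsurv : ∀ i < n, ¬ fatalShock γ β α b c x i)
    (hfatal : fatalShock γ β α b c x n) : nuShock γ β α b c x = n :=
  le_antisymm (Nat.sInf_le hfatal) <| not_lt.1 fun hlt =>
    hsurv _ hlt (Nat.sInf_mem (s := {i | fatalShock γ β α b c x i}) ⟨n, hfatal⟩)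

lemma setOf_fatal_counts_nu_eq_iUnion (p : ℕ × ℕ) :
    {x | (∃ i, fatalShock γ β α b c x i) ∧
        shockCounts γ β α b c x (nuShock γ β α b c x) = p} =
      ⋃ n, aliveWith γ β α b c n p ∩ {x | x n ∈ Ici (α + b p.1 - c p.2)} := by
  ext x
  simp only [aliveWith, mem_ofPred_eq, mem_iUnion, mem_inter_iff, mem_Ici]
  constructor
  · rintro ⟨⟨i, hi⟩, hp⟩
    have hfatal : fatalShock γ β α b c x (nuShock γ β α b c x) :=
      Nat.sInf_mem (s := {i | fatalShock γ β α b c x i}) ⟨i, hi⟩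
    refine ⟨_, ⟨fun m hm => Nat.notMem_of_lt_sInf hm, hp⟩, ?_⟩
    rwa [fatalShock, hp] at hfatal
  · rintro ⟨n, ⟨hsurv, hp⟩, hx⟩
    have hfatal : fatalShock γ β α b c x n := by rwa [fatalShock, hp]
    exact ⟨⟨n, hfatal⟩, by rwa [nuShock_eq_of_fatalShock hsurv hfatal]⟩

lemma pairwise_disjoint_aliveWith_inter_fatal (p : ℕ × ℕ) :
    Pairwise (Function.onFun Disjoint fun n =>
      aliveWith γ β α b c n p ∩ {x | x n ∈ Ici (α + b p.1 - c p.2)}) := by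
  refine (pairwise_disjoint_on _).2 fun m n hmn => disjoint_left.2 ?_
  rintro x ⟨⟨-, hp⟩, hx⟩ ⟨⟨hsurv, -⟩, -⟩
  exact hsurv m hmn (by rwa [fatalShock, hp])

end Deterministic

lemma ProbabilityTheory.iIndepFun.measure_inter_preimage_eq_mul_of_cylinderEvents
    {Ω E : Type*} [MeasurableSpace Ω] [MeasurableSpace E] {P : Measure Ω} {X : ℕ → Ω → E}
    (hindep : iIndepFun X P) (hX : ∀ i, AEMeasurable (X i) P)
    {n : ℕ} {S : Set (ℕ → E)} (hS : MeasurableSet[cylinderEvents (Iio n)] S) {R : Set E}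
    (hR : MeasurableSet R) :
    P ((fun ω i => X i ω) ⁻¹' S ∩ X n ⁻¹' R) = P ((fun ω i => X i ω) ⁻¹' S) * P (X n ⁻¹' R) := by
  refine (hindep.indepFun_finset₀ (Finset.range n) {n} (by simp) hX).meas_inter ?_ ?_
  · have past : Measurable[MeasurableSpace.comap (fun ω (i : Finset.range n) => X i ω)
        MeasurableSpace.pi, cylinderEvents (Iio n)] (fun ω i => X i ω) :=
      measurable_cylinderEvents_iff.2 fun i hi =>
        (measurable_pi_apply (⟨i, Finset.mem_range.2 hi⟩ : Finset.range n)).comp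
          (comap_measurable fun ω (i : Finset.range n) => X i ω)
    exact past hS
  · exact (measurable_pi_apply (⟨n, Finset.mem_singleton_self n⟩ : ({n} : Finset ℕ))).comp
      (comap_measurable fun ω (i : ({n} : Finset ℕ)) => X i ω) hR

lemma nullMeasurableSet_preimage_of_cylinderEvents {Ω E : Type*} [MeasurableSpace Ω]
    [MeasurableSpace E] {P : Measure Ω} {X : ℕ → Ω → E} (hX : ∀ i, AEMeasurable (X i) P)
    {Δ : Set ℕ} {S : Set (ℕ → E)} (hS : MeasurableSet[cylinderEvents Δ] S) :
    NullMeasurableSet ((fun ω i => X i ω) ⁻¹' S) P :=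
  (aemeasurable_pi_lambda _ hX).nullMeasurable (cylinderEvents_le_pi _ hS)

lemma one_sub_measure_Iio (μ : Measure ℝ) [IsProbabilityMeasure μ] (x : ℝ) :
    1 - μ (Iio x) = μ (Ici x) := by
  rw [← prob_compl_eq_one_sub measurableSet_Iio, compl_Iio]

section Probability

variable {Ω : Type*} [MeasurableSpace Ω] {P : Measure Ω} {μ : Measure ℝ} {X : ℕ → Ω → ℝ}
  {γ β α : ℝ} {b c : ℕ → ℝ}

lemma measure_aliveWith_inter (hindep : iIndepFun X P) (hX : ∀ i, AEMeasurable (X i) P)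
    (hdist : ∀ i, P.map (X i) = μ) (hγβ : γ ≤ β) (hβα : ∀ k l, β ≤ α + b k - c l) (n : ℕ)
    (p : ℕ × ℕ) {R : Set ℝ} (hR : MeasurableSet R) :
    P ((fun ω i => X i ω) ⁻¹' (aliveWith γ β α b c n p ∩ {x | x n ∈ R})) =
      P ((fun ω i => X i ω) ⁻¹' aliveWith γ β α b c n p) * μ R := by
  rw [preimage_inter, ← hdist n, Measure.map_apply_of_aemeasurable (hX n) hR]
  exact hindep.measure_inter_preimage_eq_mul_of_cylinderEvents hX
    (measurableSet_aliveWith hγβ hβα n p) hR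

lemma measure_aliveWith_succ_of_eq_union (hindep : iIndepFun X P)
    (hX : ∀ i, AEMeasurable (X i) P) (hdist : ∀ i, P.map (X i) = μ) (hγβ : γ ≤ β)
    (hβα : ∀ k l, β ≤ α + b k - c l) {n : ℕ} {p q₁ q₂ : ℕ × ℕ} {R₁ R₂ : Set ℝ}
    (hR₁ : MeasurableSet R₁) (hR₂ : MeasurableSet R₂) (hR : Disjoint R₁ R₂)
    (hunion : aliveWith γ β α b c (n + 1) p =
      aliveWith γ β α b c n q₁ ∩ {x | x n ∈ R₁} ∪ aliveWith γ β α b c n q₂ ∩ {x | x n ∈ R₂}) :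
    P ((fun ω i => X i ω) ⁻¹' aliveWith γ β α b c (n + 1) p) =
      P ((fun ω i => X i ω) ⁻¹' aliveWith γ β α b c n q₁) * μ R₁ +
        P ((fun ω i => X i ω) ⁻¹' aliveWith γ β α b c n q₂) * μ R₂ := by
  have hnull : NullMeasurableSet
      ((fun ω i => X i ω) ⁻¹' (aliveWith γ β α b c n q₂ ∩ {x | x n ∈ R₂})) P :=
    nullMeasurableSet_preimage_of_cylinderEvents hX
      ((measurableSet_aliveWith hγβ hβα n q₂).inter_setOf_apply_mem hR₂)
  have hdisj : Disjoint (aliveWith γ β α b c n q₁ ∩ {x | x n ∈ R₁})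
      (aliveWith γ β α b c n q₂ ∩ {x | x n ∈ R₂}) :=
    (hR.preimage (fun x : ℕ → ℝ => x n)).mono inter_subset_right inter_subset_right
  rw [hunion, preimage_union, measure_union₀ hnull (hdisj.preimage _).aedisjoint,
    measure_aliveWith_inter hindep hX hdist hγβ hβα n q₁ hR₁,
    measure_aliveWith_inter hindep hX hdist hγβ hβα n q₂ hR₂]

lemma tsum_measure_aliveWith_zero [IsProbabilityMeasure P] [IsProbabilityMeasure μ]
    (hindep : iIndepFun X P) (hX : ∀ i, AEMeasurable (X i) P) (hdist : ∀ i, P.map (X i) = μ)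
    (hγβ : γ ≤ β) (hβα : ∀ k l, β ≤ α + b k - c l) (j : ℕ) :
    ∑' n, P ((fun ω i => X i ω) ⁻¹' aliveWith γ β α b c n (j, 0)) =
      (μ (Ico γ β) / μ (Ici γ)) ^ j / μ (Ici γ) := by
  induction j with
  | zero =>
    have hrec (n : ℕ) : P ((fun ω i => X i ω) ⁻¹' aliveWith γ β α b c (n + 1) (0, 0)) =
        P ((fun ω i => X i ω) ⁻¹' aliveWith γ β α b c n (0, 0)) * μ (Iio γ) + 0 * 0 := by
      rw [aliveWith_succ_zero_zero hγβ hβα, measure_aliveWith_inter hindep hX hdist hγβ hβα n _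
        measurableSet_Iio, mul_zero, add_zero]
    rw [ENNReal.tsum_eq_of_linear_recurrence hrec, aliveWith_zero_zero, preimage_univ,
      measure_univ, one_sub_measure_Iio]
    simp
  | succ j ih =>
    have hrec (n : ℕ) : P ((fun ω i => X i ω) ⁻¹' aliveWith γ β α b c (n + 1) (j + 1, 0)) =
        P ((fun ω i => X i ω) ⁻¹' aliveWith γ β α b c n (j + 1, 0)) * μ (Iio γ) +
          P ((fun ω i => X i ω) ⁻¹' aliveWith γ β α b c n (j, 0)) * μ (Ico γ β) :=
      measure_aliveWith_succ_of_eq_union hindep hX hdist hγβ hβα measurableSet_Iio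
        measurableSet_Ico ((Iio_disjoint_Ici le_rfl).mono_right Ico_subset_Ici_self)
        (aliveWith_succ_succ_zero hγβ hβα n j)
    rw [ENNReal.tsum_eq_of_linear_recurrence hrec, ih, aliveWith_zero_of_ne (by simp),
      preimage_empty, measure_empty, one_sub_measure_Iio]
    simp only [div_eq_mul_inv, zero_add, pow_succ]
    ring

lemma tsum_measure_aliveWith [IsProbabilityMeasure P] [IsProbabilityMeasure μ]
    (hindep : iIndepFun X P) (hX : ∀ i, AEMeasurable (X i) P) (hdist : ∀ i, P.map (X i) = μ)
    (hγβ : γ ≤ β) (hβα : ∀ k l, β ≤ α + b k - c l) (k l : ℕ) :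
    ∑' n, P ((fun ω i => X i ω) ⁻¹' aliveWith γ β α b c n (k, l)) =
      (μ (Ico γ β) / μ (Ici γ)) ^ k / μ (Ici γ) *
        ∏ h ∈ Finset.range l, μ (Ico β (α + b k - c h)) / μ (Ici β) := by
  induction l with
  | zero => simpa using tsum_measure_aliveWith_zero hindep hX hdist hγβ hβα k
  | succ l ih =>
    have hrec (n : ℕ) : P ((fun ω i => X i ω) ⁻¹' aliveWith γ β α b c (n + 1) (k, l + 1)) =
        P ((fun ω i => X i ω) ⁻¹' aliveWith γ β α b c n (k, l + 1)) * μ (Iio β) +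
          P ((fun ω i => X i ω) ⁻¹' aliveWith γ β α b c n (k, l)) * μ (Ico β (α + b k - c l)) :=
      measure_aliveWith_succ_of_eq_union hindep hX hdist hγβ hβα measurableSet_Iio
        measurableSet_Ico ((Iio_disjoint_Ici le_rfl).mono_right Ico_subset_Ici_self)
        (aliveWith_succ_succ hβα n k l)
    rw [ENNReal.tsum_eq_of_linear_recurrence hrec, ih, aliveWith_zero_of_ne (by simp),
      preimage_empty, measure_empty, one_sub_measure_Iio, Finset.prod_range_succ]
    simp only [div_eq_mul_inv, zero_add]
    ring

theorem measure_fatal_counts_eq [IsProbabilityMeasure P] [IsProbabilityMeasure μ]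
    (hindep : iIndepFun X P) (hX : ∀ i, AEMeasurable (X i) P) (hdist : ∀ i, P.map (X i) = μ)
    (hγβ : γ ≤ β) (hβα : ∀ k l, β ≤ α + b k - c l) (k l : ℕ) :
    P {ω | (∃ i, fatalShock γ β α b c (fun j => X j ω) i) ∧
        shockCounts γ β α b c (fun j => X j ω) (nuShock γ β α b c (fun j => X j ω)) = (k, l)} =
      (μ (Ico γ β) / μ (Ici γ)) ^ k *
        (∏ h ∈ Finset.range l, μ (Ico β (α + b k - c h)) / μ (Ici β)) *
        (μ (Ici (α + b k - c l)) / μ (Ici γ)) := by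
  change P ((fun ω i => X i ω) ⁻¹' {x | (∃ i, fatalShock γ β α b c x i) ∧
    shockCounts γ β α b c x (nuShock γ β α b c x) = (k, l)}) = _
  rw [setOf_fatal_counts_nu_eq_iUnion, preimage_iUnion, measure_iUnion₀
    (fun m n hmn => ((pairwise_disjoint_aliveWith_inter_fatal _ hmn).preimage _).aedisjoint)
    (fun n => nullMeasurableSet_preimage_of_cylinderEvents hX
      ((measurableSet_aliveWith hγβ hβα n _).inter_setOf_apply_mem measurableSet_Ici))]
  simp only [measure_aliveWith_inter hindep hX hdist hγβ hβα _ _ measurableSet_Ici,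
    ENNReal.tsum_mul_right, tsum_measure_aliveWith hindep hX hdist hγβ hβα]
  simp only [div_eq_mul_inv]
  ring

end Probability

lemma survival_eq_toReal_Ici {μ : Measure ℝ} {x : ℝ} (hx : μ {x} = 0) :
    survival μ x = (μ (Ici x)).toReal := by
  rw [survival, measure_congr (Ioi_ae_eq_Ici' hx)]

lemma one_sub_survival_div_survival {μ : Measure ℝ} [IsFiniteMeasure μ] {x y : ℝ}
    (hx : μ {x} = 0) (hy : μ {y} = 0) (hxy : x ≤ y) (hx₀ : μ (Ici x) ≠ 0) :
    1 - survival μ y / survival μ x = (μ (Ico x y) / μ (Ici x)).toReal := by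
  have hpos : 0 < (μ (Ici x)).toReal := ENNReal.toReal_pos hx₀ (measure_ne_top _ _)
  rw [survival_eq_toReal_Ici hx, survival_eq_toReal_Ici hy, ← Ici_sdiff_Ici,
    measure_sdiff (Ici_subset_Ici.2 hxy) measurableSet_Ici.nullMeasurableSet (measure_ne_top _ _),
    ENNReal.toReal_div, ENNReal.toReal_sub_of_le (measure_mono (Ici_subset_Ici.2 hxy))
      (measure_ne_top _ _)]
  field_simp

theorem shock_joint_exact_pos_general
    {Ω : Type*} [MeasurableSpace Ω] (P : Measure Ω) [IsProbabilityMeasure P]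
    (μ : Measure ℝ) [IsProbabilityMeasure μ]
    (X : ℕ → Ω → ℝ)
    (hindep : iIndepFun X P)
    (hdist : ∀ i, Measure.map (X i) P = μ)
    (hcont : ∀ x : ℝ, μ {x} = 0)
    (γ β α : ℝ) (b c : ℕ → ℝ)
    (hγβ : γ < β)
    (hβα : ∀ k l : ℕ, β ≤ α + b k - c l)
    (hγpos : 0 < survival μ γ)
    (k l : ℕ) :
    (P {ω | (∃ i, fatalShock γ β α b c (fun j => X j ω) i) ∧
        (shockCounts γ β α b c (fun j => X j ω)
          (nuShock γ β α b c (fun j => X j ω))) = (k, l)}).toReal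
      = (1 - survival μ β / survival μ γ) ^ k
        * (∏ h ∈ Finset.range l, (1 - survival μ (α + b k - c h) / survival μ β))
        * (survival μ (α + b k - c l) / survival μ γ) := by
  have hX (i : ℕ) : AEMeasurable (X i) P :=
    .of_map_ne_zero (by rw [hdist i]; exact IsProbabilityMeasure.ne_zero μ)
  have hγ : μ (Ici γ) ≠ 0 := by
    rw [survival_eq_toReal_Ici (hcont γ)] at hγpos
    exact (ENNReal.toReal_pos_iff.1 hγpos).1.ne'
  rw [measure_fatal_counts_eq hindep hX hdist hγβ.le hβα, ENNReal.toReal_mul, ENNReal.toReal_mul,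
    ENNReal.toReal_pow, ENNReal.toReal_prod, ENNReal.toReal_div (μ (Ici _)),
    ← survival_eq_toReal_Ici (hcont _), ← survival_eq_toReal_Ici (hcont _),
    one_sub_survival_div_survival (hcont γ) (hcont β) hγβ.le hγ]
  by_cases hβ : μ (Ici β) = 0
  -- then `F̄(α_{k,l}) ≤ F̄(β)` vanishes, and so do both sides, whatever `x / 0` evaluates to
  · have hα : survival μ (α + b k - c l) = 0 := by
      rw [survival_eq_toReal_Ici (hcont _), measure_mono_null (Ici_subset_Ici.2 (hβα k l)) hβ,
        ENNReal.toReal_zero]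
    simp [hα]
  · simp only [one_sub_survival_div_survival (hcont β) (hcont _) (hβα k _) hβ]

/-- exact joint distribution of `(N₊(ν), N₋(ν))`, case `l ≥ 1`:
`P{N₊(ν)=k, N₋(ν)=l} = (1 - F̄(β)/F̄(γ))^k ∏_{h<l} (1 - F̄(α_{k,h})/F̄(β)) ⬝ F̄(α_{k,l})/F̄(γ)`. -/
theorem shock_joint_exact_pos
    {Ω : Type*} [MeasurableSpace Ω] (P : Measure Ω) [IsProbabilityMeasure P]
    (μ : Measure ℝ) [IsProbabilityMeasure μ]
    (X : ℕ → Ω → ℝ)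
    (hindep : iIndepFun X P)
    (hdist : ∀ i, Measure.map (X i) P = μ)
    (hcont : ∀ x : ℝ, μ {x} = 0)
    (γ β α : ℝ) (b c : ℕ → ℝ)
    (hγβ : γ < β)
    (hb : Monotone b) (hc : Monotone c) (hb0 : b 0 = 0) (hc0 : c 0 = 0)
    (hβα : ∀ k l : ℕ, β ≤ α + b k - c l)
    (hγpos : 0 < survival μ γ)
    (k l : ℕ) (hl : 1 ≤ l) :
    (P {ω | (∃ i, fatalShock γ β α b c (fun j => X j ω) i) ∧
        (shockCounts γ β α b c (fun j => X j ω)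
          (nuShock γ β α b c (fun j => X j ω))) = (k, l)}).toReal
      = (1 - survival μ β / survival μ γ) ^ k
        * (∏ h ∈ Finset.range l, (1 - survival μ (α + b k - c h) / survival μ β))
        * (survival μ (α + b k - c l) / survival μ γ) :=
  shock_joint_exact_pos_general P μ X hindep hdist hcont γ β α b c hγβ hβα hγpos k l
end

section
/- Under the same setup, for k ≥ 0 and l = 0, P{N_+(ν) = k, N_-(ν) = 0} = [1 − F̄(β)/F̄(γ)]^k · F̄(α_{k,0})/F̄(γ). -/
/-!
A shock `≥ β` is either fatal or weakening, since every boundary `α_{k,l}` is at least `β`. So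
`N₋(ν) = 0` means that all shocks before the fatal one lie below `β`, and `N₊` just counts those
in `[γ, β)`. The event `{ν = n + 1, N₊(ν) = k, N₋(ν) = 0}` is therefore the disjoint union, over
the `k`-subsets `S` of the first `n` indices, of the events `X_i ∈ [γ, β)` for `i ∈ S`, `X_i < γ`
for the other `i < n`, and `X_n ≥ α_{k,0}`. By independence each has probability
`F̄(α_{k,0}) (F̄(γ) - F̄(β))^k F(γ)^(n-k)`, and `∑ₙ C(n,k) F(γ)^(n-k) = F̄(γ)^(-(k+1))`.
-/

open MeasureTheory ProbabilityTheory Filter Set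

section Deterministic

variable {γ β α : ℝ} {b c : ℕ → ℝ} {x : ℕ → ℝ}

theorem shockCounts_of_forall_lt {j : ℕ} (h : ∀ i < j, x i < β) :
    shockCounts γ β α b c x j = (((Finset.range j).filter (γ ≤ x ·)).card, 0) := by
  induction j with
  | zero => rfl
  | succ j ih =>
    have hj : ¬ β ≤ x j := not_le.2 (h j j.lt_succ_self)
    rw [shockCounts, ih fun i hi => h i (hi.trans j.lt_succ_self), Finset.range_add_one,
      Finset.filter_insert]
    by_cases hγ : γ ≤ x j <;> simp [hγ, hj, h j j.lt_succ_self]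

theorem shockCounts_snd_monotone : Monotone fun j => (shockCounts γ β α b c x j).2 :=
  monotone_nat_of_le_succ fun j => by simp only [shockCounts]; split <;> simp

theorem lt_of_shockCounts_snd_eq_zero {n : ℕ} (hn : (shockCounts γ β α b c x n).2 = 0)
    (hnf : ∀ j < n, ¬ fatalShock γ β α b c x j) {i : ℕ} (hi : i < n) : x i < β := by
  by_contra hβ
  have hsurv : x i < α + b (shockCounts γ β α b c x i).1 - c (shockCounts γ β α b c x i).2 :=
    not_le.1 (hnf i hi)
  have hstep : (shockCounts γ β α b c x (i + 1)).2 = (shockCounts γ β α b c x i).2 + 1 := by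
    simp only [shockCounts]
    rw [if_pos ⟨not_lt.1 hβ, hsurv⟩]
  have hmono : (shockCounts γ β α b c x (i + 1)).2 ≤ (shockCounts γ β α b c x n).2 :=
    shockCounts_snd_monotone hi
  omega

theorem not_fatalShock_of_lt (hβα : ∀ k l : ℕ, β ≤ α + b k - c l) {j : ℕ} (h : x j < β) :
    ¬ fatalShock γ β α b c x j :=
  fun hf => (h.trans_le ((hβα _ _).trans hf)).false

theorem nuShock_eq_iff {n : ℕ} :
    ((∃ i, fatalShock γ β α b c x i) ∧ nuShock γ β α b c x = n) ↔
      fatalShock γ β α b c x n ∧ ∀ j < n, ¬ fatalShock γ β α b c x j := by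
  constructor
  · rintro ⟨hex, rfl⟩
    exact ⟨Nat.sInf_mem hex, fun j => Nat.notMem_of_lt_sInf⟩
  · rintro ⟨hn, hmin⟩
    exact ⟨⟨n, hn⟩, le_antisymm (Nat.sInf_le hn)
      (le_csInf ⟨n, hn⟩ fun j hj => not_lt.1 fun hjn => hmin j hjn hj)⟩

/-- The system fails at shock `n` (so `ν = n + 1`) with `N₊(ν) = k` and `N₋(ν) = 0`. -/
def FailsAt (γ β α : ℝ) (b c : ℕ → ℝ) (x : ℕ → ℝ) (k n : ℕ) : Prop :=
  (∃ i, fatalShock γ β α b c x i) ∧ nuShock γ β α b c x = n ∧ shockCounts γ β α b c x n = (k, 0)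

theorem failsAt_iff (hβα : ∀ k l : ℕ, β ≤ α + b k - c l) {k n : ℕ} :
    FailsAt γ β α b c x k n ↔
      α + b k - c 0 ≤ x n ∧ (∀ i < n, x i < β) ∧
        ((Finset.range n).filter (γ ≤ x ·)).card = k := by
  rw [FailsAt, ← and_assoc, nuShock_eq_iff]
  constructor
  · rintro ⟨⟨hfat, hmin⟩, hcounts⟩
    have hlt : ∀ i < n, x i < β := fun i =>
      lt_of_shockCounts_snd_eq_zero (by rw [hcounts]) hmin
    rw [shockCounts_of_forall_lt hlt, Prod.mk.injEq] at hcounts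
    rw [fatalShock, shockCounts_of_forall_lt hlt, hcounts.1] at hfat
    exact ⟨hfat, hlt, hcounts.1⟩
  · rintro ⟨hfat, hlt, hcard⟩
    have hcounts : shockCounts γ β α b c x n = (k, 0) := by
      rw [shockCounts_of_forall_lt hlt, hcard]
    refine ⟨⟨?_, fun j hj => not_fatalShock_of_lt hβα (hlt j hj)⟩, hcounts⟩
    rwa [fatalShock, hcounts]

end Deterministic

section Pattern

variable {γ β : ℝ} {x : ℕ → ℝ}

/-- Admissible values of shock `i` when shock `n` reaches `a`, the shocks of `S` among the
first `n` are strengthening and the others lie below `γ`. -/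
def shockSet (a γ β : ℝ) (n : ℕ) (S : Finset ℕ) (i : ℕ) : Set ℝ :=
  if i = n then Ici a else if i ∈ S then Ico γ β else Iio γ

theorem measurableSet_shockSet (a γ β : ℝ) (n : ℕ) (S : Finset ℕ) (i : ℕ) :
    MeasurableSet (shockSet a γ β n S i) := by
  unfold shockSet
  split_ifs
  exacts [measurableSet_Ici, measurableSet_Ico, measurableSet_Iio]

theorem mem_shockSet_iff_of_lt (hγβ : γ < β) {a y : ℝ} {n i : ℕ} {S : Finset ℕ} (hi : i < n) :
    y ∈ shockSet a γ β n S i ↔ y < β ∧ (i ∈ S ↔ γ ≤ y) := by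
  by_cases hiS : i ∈ S
  · simp [shockSet, hi.ne, hiS, and_comm]
  · simpa [shockSet, hi.ne, hiS] using fun hy => hy.trans hγβ

theorem forall_mem_shockSet_iff (hγβ : γ < β) {a : ℝ} {n : ℕ} {S : Finset ℕ}
    (hS : S ⊆ Finset.range n) :
    (∀ i ∈ Finset.range (n + 1), x i ∈ shockSet a γ β n S i) ↔
      a ≤ x n ∧ (∀ i < n, x i < β) ∧ S = (Finset.range n).filter (γ ≤ x ·) := by
  rw [Finset.range_add_one, Finset.forall_mem_insert]
  refine and_congr (by simp [shockSet]) ?_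
  simp only [Finset.mem_range]
  refine (forall₂_congr fun i (hi : i < n) =>
    mem_shockSet_iff_of_lt (y := x i) (a := a) (S := S) hγβ hi).trans ?_
  rw [forall₂_and]
  refine and_congr_right fun _ => ?_
  rw [Finset.ext_iff]
  refine ⟨fun h i => ?_, fun h i hi => by simpa [hi] using h i⟩
  simp only [Finset.mem_filter, Finset.mem_range]
  exact ⟨fun hiS => ⟨Finset.mem_range.1 (hS hiS), (h i (Finset.mem_range.1 (hS hiS))).1 hiS⟩,
    fun ⟨hi, hγ⟩ => (h i hi).2 hγ⟩

end Pattern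

section Event

variable {γ β α : ℝ} {b c : ℕ → ℝ}

theorem failsAt_iff_exists_shockSet (hγβ : γ < β) (hβα : ∀ k l : ℕ, β ≤ α + b k - c l)
    {x : ℕ → ℝ} {k n : ℕ} :
    FailsAt γ β α b c x k n ↔
      ∃ S ∈ Finset.powersetCard k (Finset.range n),
        ∀ i ∈ Finset.range (n + 1), x i ∈ shockSet (α + b k - c 0) γ β n S i := by
  rw [failsAt_iff hβα]
  constructor
  · rintro ⟨hfat, hlt, hcard⟩
    exact ⟨_, Finset.mem_powersetCard.2 ⟨Finset.filter_subset _ _, hcard⟩,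
      (forall_mem_shockSet_iff hγβ (Finset.filter_subset _ _)).2 ⟨hfat, hlt, rfl⟩⟩
  · rintro ⟨S, hS, hx⟩
    obtain ⟨hsub, rfl⟩ := Finset.mem_powersetCard.1 hS
    obtain ⟨hfat, hlt, rfl⟩ := (forall_mem_shockSet_iff hγβ hsub).1 hx
    exact ⟨hfat, hlt, rfl⟩

variable {Ω : Type*} (X : ℕ → Ω → ℝ)

theorem setOf_failsAt_eq_biUnion (hγβ : γ < β) (hβα : ∀ k l : ℕ, β ≤ α + b k - c l)
    (k n : ℕ) :
    {ω | FailsAt γ β α b c (fun j => X j ω) k n} =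
      ⋃ S ∈ Finset.powersetCard k (Finset.range n),
        ⋂ i ∈ Finset.range (n + 1), X i ⁻¹' shockSet (α + b k - c 0) γ β n S i := by
  ext ω
  simp only [mem_ofPred_eq, mem_iUnion, mem_iInter, mem_preimage, exists_prop]
  exact failsAt_iff_exists_shockSet hγβ hβα

theorem pairwiseDisjoint_shockSet (hγβ : γ < β) (a : ℝ) (k n : ℕ) :
    (Finset.powersetCard k (Finset.range n) : Set (Finset ℕ)).PairwiseDisjoint
      fun S => ⋂ i ∈ Finset.range (n + 1), X i ⁻¹' shockSet a γ β n S i := by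
  intro S hS T hT hST
  refine disjoint_left.2 fun ω hωS hωT => hST ?_
  simp only [mem_iInter, mem_preimage] at hωS hωT
  rw [((forall_mem_shockSet_iff hγβ (Finset.mem_powersetCard.1 hS).1).1 hωS).2.2,
    ((forall_mem_shockSet_iff hγβ (Finset.mem_powersetCard.1 hT).1).1 hωT).2.2]

end Event

section Probability

variable {Ω ι E : Type*} [MeasurableSpace Ω] [MeasurableSpace E] {P : Measure Ω} {μ : Measure E}
  [NeZero μ] {X : ι → Ω → E}

theorem aemeasurable_of_map_eq {f : Ω → E} (h : P.map f = μ) : AEMeasurable f P :=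
  aemeasurable_of_map_neZero (h ▸ inferInstance)

theorem nullMeasurableSet_biInter_preimage (hdist : ∀ i, P.map (X i) = μ) (s : Finset ι)
    {t : ι → Set E} (ht : ∀ i ∈ s, MeasurableSet (t i)) :
    NullMeasurableSet (⋂ i ∈ s, X i ⁻¹' t i) P :=
  s.nullMeasurableSet_biInter fun i hi =>
    (aemeasurable_of_map_eq (hdist i)).nullMeasurableSet_preimage (ht i hi)

theorem ProbabilityTheory.iIndepFun.measure_biInter_preimage (hindep : iIndepFun X P)
    (hdist : ∀ i, P.map (X i) = μ) (s : Finset ι) {t : ι → Set E}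
    (ht : ∀ i ∈ s, MeasurableSet (t i)) :
    P (⋂ i ∈ s, X i ⁻¹' t i) = ∏ i ∈ s, μ (t i) := by
  rw [hindep.measure_inter_preimage_eq_mul s ht]
  refine Finset.prod_congr rfl fun i hi => ?_
  rw [← hdist i, Measure.map_apply_of_aemeasurable (aemeasurable_of_map_eq (hdist i)) (ht i hi)]

end Probability

theorem Finset.prod_ite_mem_of_subset {ι M : Type*} [CommMonoid M] [DecidableEq ι]
    {s S : Finset ι} (h : S ⊆ s) (p q : M) :
    ∏ i ∈ s, (if i ∈ S then p else q) = p ^ S.card * q ^ (s.card - S.card) := by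
  rw [Finset.prod_ite, Finset.prod_const, Finset.prod_const, Finset.filter_mem_eq_inter,
    Finset.inter_eq_right.2 h, ← Finset.sdiff_eq_filter, Finset.card_sdiff_of_subset h]

section ShockProbability

variable {Ω : Type*} [MeasurableSpace Ω] {P : Measure Ω} {μ : Measure ℝ} [NeZero μ]
  {X : ℕ → Ω → ℝ} {γ β α : ℝ} {b c : ℕ → ℝ}

theorem measure_biInter_preimage_shockSet (hindep : iIndepFun X P) (hdist : ∀ i, P.map (X i) = μ)
    (a : ℝ) {k n : ℕ} {S : Finset ℕ} (hS : S ∈ Finset.powersetCard k (Finset.range n)) :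
    P (⋂ i ∈ Finset.range (n + 1), X i ⁻¹' shockSet a γ β n S i) =
      μ (Ici a) * μ (Ico γ β) ^ k * μ (Iio γ) ^ (n - k) := by
  obtain ⟨hsub, hcard⟩ := Finset.mem_powersetCard.1 hS
  have hbelow : ∀ i ∈ Finset.range n,
      μ (shockSet a γ β n S i) = if i ∈ S then μ (Ico γ β) else μ (Iio γ) := fun i hi => by
    simp only [shockSet, (Finset.mem_range.1 hi).ne, if_false]
    split_ifs <;> rfl
  rw [hindep.measure_biInter_preimage hdist _ fun i _ => measurableSet_shockSet a γ β n S i,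
    Finset.prod_range_succ, Finset.prod_congr rfl hbelow, Finset.prod_ite_mem_of_subset hsub,
    Finset.card_range, hcard]
  simp only [shockSet, if_true]
  ring

variable (P X)

theorem nullMeasurableSet_setOf_failsAt (hdist : ∀ i, P.map (X i) = μ) (hγβ : γ < β)
    (hβα : ∀ k l : ℕ, β ≤ α + b k - c l) (k n : ℕ) :
    NullMeasurableSet {ω | FailsAt γ β α b c (fun j => X j ω) k n} P := by
  rw [setOf_failsAt_eq_biUnion X hγβ hβα]
  exact Finset.nullMeasurableSet_biUnion _ fun S _ =>
    nullMeasurableSet_biInter_preimage hdist _ fun i _ => measurableSet_shockSet _ γ β n S i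

theorem measure_setOf_failsAt (hindep : iIndepFun X P) (hdist : ∀ i, P.map (X i) = μ)
    (hγβ : γ < β) (hβα : ∀ k l : ℕ, β ≤ α + b k - c l) (k n : ℕ) :
    P {ω | FailsAt γ β α b c (fun j => X j ω) k n} =
      μ (Ici (α + b k - c 0)) * μ (Ico γ β) ^ k * (n.choose k * μ (Iio γ) ^ (n - k)) := by
  rw [setOf_failsAt_eq_biUnion X hγβ hβα,
    measure_biUnion_finset₀ ((pairwiseDisjoint_shockSet X hγβ _ k n).mono'
      fun _ _ h => h.aedisjoint)
      fun S _ => nullMeasurableSet_biInter_preimage hdist _ fun i _ =>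
        measurableSet_shockSet _ γ β n S i,
    Finset.sum_congr rfl fun S hS => measure_biInter_preimage_shockSet hindep hdist _ hS,
    Finset.sum_const, Finset.card_powersetCard, Finset.card_range, nsmul_eq_mul]
  ring

end ShockProbability

section Survival

variable {μ : Measure ℝ} [NullSingletonClass μ]

theorem survival_eq_measureReal_Ici (a : ℝ) : survival μ a = μ.real (Ici a) :=
  measureReal_congr Ioi_ae_eq_Ici

theorem measureReal_Ico_eq_survival_sub [IsFiniteMeasure μ] {γ β : ℝ} (h : γ ≤ β) :
    μ.real (Ico γ β) = survival μ γ - survival μ β := by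
  rw [survival_eq_measureReal_Ici, survival_eq_measureReal_Ici, ← Ici_sdiff_Ici,
    measureReal_sdiff (Ici_subset_Ici.2 h) measurableSet_Ici]

theorem measureReal_Iio_eq_one_sub_survival [IsProbabilityMeasure μ] (γ : ℝ) :
    μ.real (Iio γ) = 1 - survival μ γ := by
  rw [survival_eq_measureReal_Ici, ← compl_Ici, measureReal_compl measurableSet_Ici, probReal_univ]

end Survival

theorem hasSum_choose_mul_pow_sub {𝕜 : Type*} [NormedDivisionRing 𝕜] [HasSummableGeomSeries 𝕜]
    (k : ℕ) {r : 𝕜} (hr : ‖r‖ < 1) :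
    HasSum (fun n => (n.choose k : 𝕜) * r ^ (n - k)) (1 / (1 - r) ^ (k + 1)) := by
  refine (Function.Injective.hasSum_iff (add_left_injective k) fun n hn => ?_).1 ?_
  · have hnk : n < k := not_le.1 fun hkn => hn ⟨n - k, Nat.sub_add_cancel hkn⟩
    simp [Nat.choose_eq_zero_of_lt hnk]
  · simpa [Function.comp_def] using hasSum_choose_mul_geometric_of_norm_lt_one k hr

theorem shock_joint_exact_zero_general
    {Ω : Type*} [MeasurableSpace Ω] (P : Measure Ω) [IsProbabilityMeasure P]
    (μ : Measure ℝ) [IsProbabilityMeasure μ]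
    (X : ℕ → Ω → ℝ)
    (hindep : iIndepFun X P)
    (hdist : ∀ i, Measure.map (X i) P = μ)
    (hcont : ∀ x : ℝ, μ {x} = 0)
    (γ β α : ℝ) (b c : ℕ → ℝ)
    (hγβ : γ < β)
    (hβα : ∀ k l : ℕ, β ≤ α + b k - c l)
    (hγpos : 0 < survival μ γ)
    (k : ℕ) :
    (P {ω | (∃ i, fatalShock γ β α b c (fun j => X j ω) i) ∧
        (shockCounts γ β α b c (fun j => X j ω)
          (nuShock γ β α b c (fun j => X j ω))) = (k, 0)}).toReal
      = (1 - survival μ β / survival μ γ) ^ k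
        * (survival μ (α + b k - c 0) / survival μ γ) := by
  have : NullSingletonClass μ := ⟨hcont⟩
  have hunion : {ω | (∃ i, fatalShock γ β α b c (fun j => X j ω) i) ∧
      shockCounts γ β α b c (fun j => X j ω) (nuShock γ β α b c (fun j => X j ω)) = (k, 0)} =
      ⋃ n, {ω | FailsAt γ β α b c (fun j => X j ω) k n} := by
    ext ω
    simp [FailsAt]
  have hdisj : Pairwise (Function.onFun Disjoint fun n =>
      {ω | FailsAt γ β α b c (fun j => X j ω) k n}) :=
    fun m n hmn => disjoint_left.2 fun ω hm hn => hmn (hm.2.1.symm.trans hn.2.1)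
  have hr : ‖1 - survival μ γ‖ < 1 := by
    rw [Real.norm_of_nonneg (measureReal_Iio_eq_one_sub_survival (μ := μ) γ ▸ measureReal_nonneg)]
    linarith
  rw [hunion, measure_iUnion₀ (hdisj.mono fun _ _ h => h.aedisjoint)
      (nullMeasurableSet_setOf_failsAt P X hdist hγβ hβα k),
    ENNReal.tsum_toReal_eq fun _ => measure_ne_top _ _]
  simp only [measure_setOf_failsAt P X hindep hdist hγβ hβα, ENNReal.toReal_mul, ENNReal.toReal_pow,
    ENNReal.toReal_natCast, ← measureReal_def, ← survival_eq_measureReal_Ici,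
    measureReal_Ico_eq_survival_sub hγβ.le, measureReal_Iio_eq_one_sub_survival]
  rw [((hasSum_choose_mul_pow_sub k hr).mul_left _).tsum_eq, sub_sub_cancel,
    one_sub_div hγpos.ne', div_pow]
  field_simp
  ring

/-- exact joint distribution of `(N₊(ν), N₋(ν))`, case `l = 0`:
`P{N₊(ν)=k, N₋(ν)=0} = (1 - F̄(β)/F̄(γ))^k ⬝ F̄(α_{k,0})/F̄(γ)`. -/
theorem shock_joint_exact_zero
    {Ω : Type*} [MeasurableSpace Ω] (P : Measure Ω) [IsProbabilityMeasure P]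
    (μ : Measure ℝ) [IsProbabilityMeasure μ]
    (X : ℕ → Ω → ℝ)
    (hindep : iIndepFun X P)
    (hdist : ∀ i, Measure.map (X i) P = μ)
    (hcont : ∀ x : ℝ, μ {x} = 0)
    (γ β α : ℝ) (b c : ℕ → ℝ)
    (hγβ : γ < β)
    (hb : Monotone b) (hc : Monotone c) (hb0 : b 0 = 0) (hc0 : c 0 = 0)
    (hβα : ∀ k l : ℕ, β ≤ α + b k - c l)
    (hγpos : 0 < survival μ γ)
    (k : ℕ) :
    (P {ω | (∃ i, fatalShock γ β α b c (fun j => X j ω) i) ∧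
        (shockCounts γ β α b c (fun j => X j ω)
          (nuShock γ β α b c (fun j => X j ω))) = (k, 0)}).toReal
      = (1 - survival μ β / survival μ γ) ^ k
        * (survival μ (α + b k - c 0) / survival μ γ) :=
  shock_joint_exact_zero_general P μ X hindep hdist hcont γ β α b c hγβ hβα hγpos k
end
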